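/- Let v_r ≥ 0, v_f ≥ 0, ρ ≥ 0, a_max,accel ≥ 0, and 0 < a_min,brake ≤ a_max,brake be real numbers, and let a_f be a real number with 0 < a_f ≤ a_max,brake. Define the rear-car position x_r: ℝ≥0 → ℝ by x_r(t) = v_r·t + (1/2)·a_max,accel·t² for 0 ≤ t ≤ ρ, then x_r(t) = x_r(ρ) + v_ρ·(t − ρ) − (1/2)·a_min,brake·(t − ρ)² for ρ ≤ t ≤ ρ + v_ρ/a_min,brake where v_ρ = v_r + ρ·a_max,accel, and x_r constant thereafter; define the front-car position x_f: ℝ≥0 → ℝ by x_f(t) = d + v_f·t − (1/2)·a_f·t² for 0 ≤ t ≤ v_f/a_f and x_f(t) = d + v_f²/(2·a_f) thereafter. If d ≥ d_lon_min = max(v_r·ρ + (1/2)·ρ²·a_max,accel + v_ρ²/(2·a_min,brake) − v_f²/(2·a_max,brake), 0), then x_r(t) ≤ x_f(t) for all t ≥ 0; that is, no longitudinal collision occurs at any time. -/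

import Mathlib

/-!
Compare the rear car with a virtual front car that brakes at the maximal rate `amaxb`; it is
never ahead of the real one. For a braking car, position plus stopping distance `v² / (2a)`
stays constant, and for the rear car it never exceeds its final stopping point. So at a time
when the virtual front car is no faster than the rear car, its remaining stopping distance is
the smaller one, and the gap `d ≥ d_lon_min` absorbs the difference of the stopping points.
At a time when the virtual front car is faster, it has been faster all along, because the rear
car never decelerates faster than `aminb ≤ amaxb`; so it has covered more distance.
-/

open NNReal

/-- Worst-case rear-car position: initial velocity `vr`, acceleration `aacc` during
the response phase `[0, ρ]`, then braking at rate `aminb` until stopped. -/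
noncomputable def rearPos (vr ρ aacc aminb : ℝ) (t : ℝ≥0) : ℝ :=
  if (t : ℝ) ≤ ρ then vr * (t : ℝ) + (1/2) * aacc * (t : ℝ)^2
  else if (t : ℝ) ≤ ρ + (vr + ρ * aacc) / aminb then
    (vr * ρ + (1/2) * aacc * ρ^2) + (vr + ρ * aacc) * ((t : ℝ) - ρ)
      - (1/2) * aminb * ((t : ℝ) - ρ)^2
  else
    (vr * ρ + (1/2) * aacc * ρ^2) + (vr + ρ * aacc) * ((vr + ρ * aacc) / aminb)
      - (1/2) * aminb * ((vr + ρ * aacc) / aminb)^2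

/-- Front-car position: starting at gap `d` with velocity `vf`, braking at constant
rate `af` until stopped. -/
noncomputable def frontPos (d vf af : ℝ) (t : ℝ≥0) : ℝ :=
  if (t : ℝ) ≤ vf / af then d + vf * (t : ℝ) - (1/2) * af * (t : ℝ)^2
  else d + vf^2 / (2 * af)

/-- Distance covered within time `s` by a car braking from speed `v` at rate `a` until it
stops. -/
noncomputable def brakingDist (v a s : ℝ) : ℝ :=
  if s ≤ v / a then v * s - (1/2) * a * s ^ 2 else v ^ 2 / (2 * a)

noncomputable def brakingSpeed (v a s : ℝ) : ℝ := max (v - a * s) 0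

section Braking

variable {v a s : ℝ}

lemma brakingSpeed_nonneg : 0 ≤ brakingSpeed v a s := le_max_right _ _

lemma brakingDist_add_brakingSpeed_sq_div (ha : 0 < a) :
    brakingDist v a s + brakingSpeed v a s ^ 2 / (2 * a) = v ^ 2 / (2 * a) := by
  unfold brakingDist brakingSpeed
  split_ifs with hs
  · rw [max_eq_left (by rwa [le_div_iff₀ ha, mul_comm, ← sub_nonneg] at hs)]
    field_simp
    ring
  · rw [max_eq_right (by rw [not_le, div_lt_iff₀ ha] at hs; linarith)]
    ring

lemma brakingDist_eq_of_brakingSpeed_pos (ha : 0 < a) (hw : 0 < brakingSpeed v a s) :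
    brakingDist v a s = s * brakingSpeed v a s + a * s ^ 2 / 2 := by
  have hmoving : 0 < v - a * s := by simpa [brakingSpeed] using hw
  have hs : s ≤ v / a := by rw [le_div_iff₀ ha]; linarith
  rw [brakingDist, if_pos hs, brakingSpeed, max_eq_left hmoving.le]
  ring

lemma brakingDist_le_mul_brakingSpeed_add (hv : 0 ≤ v) (ha : 0 < a) :
    brakingDist v a s ≤ s * brakingSpeed v a s + a * s ^ 2 / 2 := by
  rcases brakingSpeed_nonneg.lt_or_eq with hw | hw
  · exact (brakingDist_eq_of_brakingSpeed_pos ha hw).le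
  · have hstop : v ≤ a * s := by simpa [brakingSpeed] using hw.symm
    have hstopped : brakingDist v a s = v ^ 2 / (2 * a) := by
      simpa [← hw] using brakingDist_add_brakingSpeed_sq_div (v := v) (s := s) ha
    calc brakingDist v a s = v ^ 2 / (2 * a) := hstopped
      _ ≤ (a * s) ^ 2 / (2 * a) := by gcongr
      _ = s * brakingSpeed v a s + a * s ^ 2 / 2 := by rw [← hw]; field_simp; ring

lemma brakingDist_antitoneOn_rate (hv : 0 ≤ v) (hs : 0 ≤ s) :
    AntitoneOn (fun a => brakingDist v a s) (Set.Ioi 0) := by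
  intro a (ha : 0 < a) A (hA : 0 < A) haA
  dsimp only [brakingDist]
  split_ifs with hsA hsa hsa
  · nlinarith
  · exact absurd (hsA.trans (div_le_div_of_nonneg_left hv ha haA)) hsa
  · rw [not_le, div_lt_iff₀ hA] at hsA
    rw [le_div_iff₀ ha] at hsa
    rw [div_le_iff₀ (by positivity)]
    nlinarith [mul_nonneg (mul_nonneg hA.le hs) (sub_nonneg.mpr hsa)]
  · gcongr

end Braking

lemma frontPos_eq_add_brakingDist (d vf af : ℝ) (t : ℝ≥0) :
    frontPos d vf af t = d + brakingDist vf af t := by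
  unfold frontPos brakingDist
  split_ifs <;> ring

noncomputable def rearSpeed (vr ρ aacc aminb : ℝ) (t : ℝ≥0) : ℝ :=
  if (t : ℝ) ≤ ρ then vr + aacc * t else brakingSpeed (vr + ρ * aacc) aminb (t - ρ)

section Rear

variable {vr ρ aacc b : ℝ} {t : ℝ≥0}

lemma rearPos_of_le (ht : (t : ℝ) ≤ ρ) :
    rearPos vr ρ aacc b t = vr * t + (1/2) * aacc * (t : ℝ) ^ 2 := if_pos ht

lemma rearPos_of_lt (hb : 0 < b) (ht : ρ < t) :
    rearPos vr ρ aacc b t =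
      vr * ρ + (1/2) * aacc * ρ ^ 2 + brakingDist (vr + ρ * aacc) b (t - ρ) := by
  rw [rearPos, if_neg ht.not_ge, brakingDist]
  simp only [sub_le_iff_le_add']
  split_ifs
  · ring
  · field_simp
    ring

lemma rearSpeed_nonneg (hvr : 0 ≤ vr) (hacc : 0 ≤ aacc) : 0 ≤ rearSpeed vr ρ aacc b t := by
  unfold rearSpeed
  split_ifs
  · positivity
  · exact brakingSpeed_nonneg

lemma rearPos_add_rearSpeed_sq_div_le (hvr : 0 ≤ vr) (hacc : 0 ≤ aacc) (hb : 0 < b) :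
    rearPos vr ρ aacc b t + rearSpeed vr ρ aacc b t ^ 2 / (2 * b) ≤
      vr * ρ + (1/2) * aacc * ρ ^ 2 + (vr + ρ * aacc) ^ 2 / (2 * b) := by
  by_cases ht : (t : ℝ) ≤ ρ
  · rw [rearPos_of_le ht, rearSpeed, if_pos ht]
    have ht0 : (0 : ℝ) ≤ t := t.2
    rw [mul_comm ρ]
    gcongr
  · rw [rearPos_of_lt hb (not_le.mp ht), rearSpeed, if_neg ht, add_assoc,
      brakingDist_add_brakingSpeed_sq_div hb]

/-- The rear car never decelerates faster than `b`, so at every earlier time `s ≤ t` its speed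
was at most `rearSpeed t + b * (t - s)`. -/
lemma rearPos_le_mul_rearSpeed_add (hvr : 0 ≤ vr) (hρ : 0 ≤ ρ) (hacc : 0 ≤ aacc)
    (hb : 0 < b) :
    rearPos vr ρ aacc b t ≤ t * rearSpeed vr ρ aacc b t + b * (t : ℝ) ^ 2 / 2 := by
  by_cases ht : (t : ℝ) ≤ ρ
  · rw [rearPos_of_le ht, rearSpeed, if_pos ht]
    nlinarith [sq_nonneg (t : ℝ)]
  · rw [rearPos_of_lt hb (not_le.mp ht), rearSpeed, if_neg ht]
    have hbraking := brakingDist_le_mul_brakingSpeed_add (v := vr + ρ * aacc) (s := t - ρ)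
      (by positivity) hb
    have hspeed : vr + ρ * aacc - b * (t - ρ) ≤ brakingSpeed (vr + ρ * aacc) b (t - ρ) :=
      le_max_left _ _
    nlinarith

end Rear

lemma rearPos_le_max_add_brakingDist {vr vf ρ aacc b B : ℝ} (hvr : 0 ≤ vr) (hρ : 0 ≤ ρ)
    (hacc : 0 ≤ aacc) (hb : 0 < b) (hbB : b ≤ B) (t : ℝ≥0) :
    rearPos vr ρ aacc b t ≤ max (vr * ρ + (1/2) * ρ^2 * aacc
        + (vr + ρ * aacc)^2 / (2 * b) - vf^2 / (2 * B)) 0 + brakingDist vf B t := by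
  have hB : 0 < B := hb.trans_le hbB
  have hfront := brakingDist_add_brakingSpeed_sq_div (v := vf) (s := t) hB
  have hrear := rearPos_add_rearSpeed_sq_div_le (ρ := ρ) (t := t) hvr hacc hb
  rcases le_or_gt (brakingSpeed vf B t) (rearSpeed vr ρ aacc b t) with hslower | hfaster
  · have hremaining :
        brakingSpeed vf B t ^ 2 / (2 * B) ≤ rearSpeed vr ρ aacc b t ^ 2 / (2 * b) := by
      have := brakingSpeed_nonneg (v := vf) (a := B) (s := t)
      gcongr
    have hmax := le_max_left (vr * ρ + (1/2) * ρ^2 * aacc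
        + (vr + ρ * aacc)^2 / (2 * b) - vf^2 / (2 * B)) 0
    linarith
  · have hmoving := (rearSpeed_nonneg hvr hacc).trans_lt hfaster
    calc rearPos vr ρ aacc b t ≤ t * rearSpeed vr ρ aacc b t + b * (t : ℝ) ^ 2 / 2 :=
          rearPos_le_mul_rearSpeed_add hvr hρ hacc hb
      _ ≤ t * brakingSpeed vf B t + B * (t : ℝ) ^ 2 / 2 := by gcongr
      _ = brakingDist vf B t := (brakingDist_eq_of_brakingSpeed_pos hB hmoving).symm
      _ ≤ _ := le_add_of_nonneg_left (le_max_right _ _)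

theorem no_longitudinal_collision (vr vf ρ aacc aminb amaxb af d : ℝ)
    (hvr : 0 ≤ vr) (hvf : 0 ≤ vf) (hρ : 0 ≤ ρ) (hacc : 0 ≤ aacc)
    (hminb : 0 < aminb) (hbb : aminb ≤ amaxb)
    (haf : 0 < af) (haf' : af ≤ amaxb)
    (hd : d ≥ max (vr * ρ + (1/2) * ρ^2 * aacc
        + (vr + ρ * aacc)^2 / (2 * aminb) - vf^2 / (2 * amaxb)) 0) :
    ∀ t : ℝ≥0, rearPos vr ρ aacc aminb t ≤ frontPos d vf af t := by
  intro t
  calc rearPos vr ρ aacc aminb t ≤ _ + brakingDist vf amaxb t :=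
        rearPos_le_max_add_brakingDist hvr hρ hacc hminb hbb t
    _ ≤ d + brakingDist vf af t :=
        add_le_add hd (brakingDist_antitoneOn_rate hvf t.2 haf (haf.trans_le haf') haf')
    _ = frontPos d vf af t := (frontPos_eq_add_brakingDist d vf af t).symm
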